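/- The map θ: (a₁, …, aₙ) ↦ (1 − aₙ, a₁, …, aₙ₋₁) is a graph automorphism of the Hasse diagram of Φₙ: for vertices x, y ∈ {0,1}ⁿ, y covers x or x covers y in Φₙ if and only if θ(y) covers θ(x) or θ(x) covers θ(y). -/
import Mathlib


/-- A sequence of integers is *alternating* when each entry lies in `{-1,0,1}` and
the nonzero entries, read in order, form the pattern `1, -1, 1, …, -1, 1`
(alternating in sign, starting and ending with `1`). -/
def IsAlternating (n : ℕ) (α : Fin n → ℤ) : Prop :=
  (∀ i, α i = -1 ∨ α i = 0 ∨ α i = 1) ∧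
  (∃ i, α i ≠ 0) ∧
  (∀ i, α i ≠ 0 → (∀ j, j < i → α j = 0) → α i = 1) ∧
  (∀ i, α i ≠ 0 → (∀ j, i < j → α j = 0) → α i = 1) ∧
  (∀ i j, i < j → α i ≠ 0 → α j ≠ 0 → (∀ k, i < k → k < j → α k = 0) → α j = -α i)

/-- In Φₙ, y covers x when the integer sequence y - x is alternating. -/
def Covers (n : ℕ) (x y : Fin n → Fin 2) : Prop :=
  IsAlternating n (fun i => ((y i : ℕ) : ℤ) - ((x i : ℕ) : ℤ))

/-- The map θ : (a₁,…,aₙ) ↦ (1 - aₙ, a₁, …, aₙ₋₁) on {0,1}ⁿ. -/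
def theta (n : ℕ) (a : Fin n → Fin 2) : Fin n → Fin 2 :=
  fun i =>
    if h : (i : ℕ) = 0 then 1 - a ⟨n - 1, Nat.sub_lt i.pos Nat.one_pos⟩
    else a ⟨(i : ℕ) - 1, Nat.lt_of_le_of_lt (Nat.sub_le _ _) i.isLt⟩

/-- The map (a₁,…,aₙ) ↦ (a₂, …, aₙ, 1 - a₁) on {0,1}ⁿ (the inverse of θ). -/
def thetaInv (n : ℕ) (a : Fin n → Fin 2) : Fin n → Fin 2 :=
  fun i =>
    if h : (i : ℕ) = n - 1 then 1 - a ⟨0, i.pos⟩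
    else a ⟨(i : ℕ) + 1, by have h1 := i.isLt; omega⟩

/-! ### Auxiliary machinery -/

/-- ℕ-indexed version of alternating (sequence vanishes off range implicitly). -/
def AltN (f : ℕ → ℤ) : Prop :=
  (∀ k, f k = -1 ∨ f k = 0 ∨ f k = 1) ∧
  (∃ k, f k ≠ 0) ∧
  (∀ k, f k ≠ 0 → (∀ j, j < k → f j = 0) → f k = 1) ∧
  (∀ k, f k ≠ 0 → (∀ j, k < j → f j = 0) → f k = 1) ∧
  (∀ k j, k < j → f k ≠ 0 → f j ≠ 0 → (∀ m, k < m → m < j → f m = 0) → f j = -f k)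

/-- Extension of a `Fin n`-sequence to ℕ by zero. -/
def Aext (n : ℕ) (α : Fin n → ℤ) : ℕ → ℤ := fun k => if h : k < n then α ⟨k, h⟩ else 0

lemma Aext_lt {n : ℕ} {α : Fin n → ℤ} {k : ℕ} (h : k < n) : Aext n α k = α ⟨k, h⟩ :=
  dif_pos h

lemma Aext_ge {n : ℕ} {α : Fin n → ℤ} {k : ℕ} (h : ¬ k < n) : Aext n α k = 0 :=
  dif_neg h

lemma Aext_fin {n : ℕ} {α : Fin n → ℤ} (i : Fin n) : Aext n α (i : ℕ) = α i := by
  rw [Aext_lt i.isLt]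

lemma isAlt_iff (n : ℕ) (α : Fin n → ℤ) : IsAlternating n α ↔ AltN (Aext n α) := by
  constructor
  · rintro ⟨h1, ⟨w, hw⟩, h3, h4, h5⟩
    refine ⟨?_, ⟨(w : ℕ), ?_⟩, ?_, ?_, ?_⟩
    · intro k
      by_cases h : k < n
      · rw [Aext_lt h]; exact h1 _
      · rw [Aext_ge h]; omega
    · rw [Aext_fin]; exact hw
    · intro k hk hprev
      have hkn : k < n := by by_contra h; exact hk (Aext_ge h)
      rw [Aext_lt hkn] at hk ⊢
      apply h3 _ hk
      intro j hj
      have := hprev (j : ℕ) hj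
      rwa [Aext_fin] at this
    · intro k hk hnext
      have hkn : k < n := by by_contra h; exact hk (Aext_ge h)
      rw [Aext_lt hkn] at hk ⊢
      apply h4 _ hk
      intro j hj
      have := hnext (j : ℕ) hj
      rwa [Aext_fin] at this
    · intro k j hkj hk hj hbet
      have hjn : j < n := by by_contra h; exact hj (Aext_ge h)
      have hkn : k < n := lt_trans hkj hjn
      rw [Aext_lt hkn] at hk
      rw [Aext_lt hjn] at hj
      rw [Aext_lt hjn, Aext_lt hkn]
      apply h5 ⟨k, hkn⟩ ⟨j, hjn⟩ hkj hk hj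
      intro m hm1 hm2
      have := hbet (m : ℕ) hm1 hm2
      rwa [Aext_fin] at this
  · rintro ⟨h1, ⟨w, hw⟩, h3, h4, h5⟩
    have hwn : w < n := by by_contra h; exact hw (Aext_ge h)
    refine ⟨?_, ⟨⟨w, hwn⟩, ?_⟩, ?_, ?_, ?_⟩
    · intro i
      have := h1 (i : ℕ)
      rwa [Aext_fin] at this
    · rwa [Aext_lt hwn] at hw
    · intro i hi hprev
      have hp : ∀ j, j < (i : ℕ) → Aext n α j = 0 := by
        intro j hj
        have hjn : j < n := lt_trans hj i.isLt
        rw [Aext_lt hjn]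
        exact hprev ⟨j, hjn⟩ hj
      have := h3 (i : ℕ) (by rwa [Aext_fin]) hp
      rwa [Aext_fin] at this
    · intro i hi hnext
      have hp : ∀ j, (i : ℕ) < j → Aext n α j = 0 := by
        intro j hj
        by_cases hjn : j < n
        · rw [Aext_lt hjn]
          exact hnext ⟨j, hjn⟩ hj
        · exact Aext_ge hjn
      have := h4 (i : ℕ) (by rwa [Aext_fin]) hp
      rwa [Aext_fin] at this
    · intro i j hij hi hj hbet
      have hp : ∀ m, (i : ℕ) < m → m < (j : ℕ) → Aext n α m = 0 := by
        intro m hm1 hm2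
        have hmn : m < n := lt_trans hm2 j.isLt
        rw [Aext_lt hmn]
        exact hbet ⟨m, hmn⟩ hm1 hm2
      have := h5 (i : ℕ) (j : ℕ) hij (by rwa [Aext_fin]) (by rwa [Aext_fin]) hp
      rwa [Aext_fin, Aext_fin] at this

/-- Rotation forward: `g = (−f(n−1), f 0, …, f(n−2))` up to sign conventions. -/
lemma rotA' (n : ℕ) (f g : ℕ → ℤ)
    (hf0 : ∀ k, n ≤ k → f k = 0)
    (hg0 : ∀ _ : 0 < n, g 0 = -f (n - 1))
    (hgs : ∀ k, 0 < k → k < n → g k = f (k - 1))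
    (hgout : ∀ k, n ≤ k → g k = 0)
    (hf : AltN f) : AltN g ∨ AltN (fun k => -(g k)) := by
  obtain ⟨h1, ⟨w, hw⟩, h3, h4, h5⟩ := hf
  have hwn : w < n := by by_contra h; exact hw (hf0 w (by omega))
  have hn : 0 < n := by omega
  have hg0' : g 0 = -f (n - 1) := hg0 hn
  by_cases hL : f (n - 1) = 0
  · left
    have hwlt : w < n - 1 := by
      rcases Nat.lt_or_ge w (n - 1) with h | h
      · exact h
      · exfalso; apply hw
        have : w = n - 1 := by omega
        rw [this]; exact hL
    refine ⟨?_, ⟨w + 1, ?_⟩, ?_, ?_, ?_⟩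
    · intro k
      rcases Nat.eq_zero_or_pos k with h | h
      · subst h; have := h1 (n - 1); omega
      · by_cases hk : k < n
        · rw [hgs k h hk]; exact h1 _
        · rw [hgout k (by omega)]; omega
    · rw [hgs (w + 1) (by omega) (by omega)]
      simpa using hw
    · intro k hk hprev
      have hkn : k < n := by by_contra h; exact hk (hgout k (by omega))
      have hk0 : 0 < k := by
        rcases Nat.eq_zero_or_pos k with h | h
        · exfalso; apply hk; subst h; rw [hg0', hL]; ring
        · exact h
      rw [hgs k hk0 hkn] at hk ⊢
      apply h3 (k - 1) hk
      intro j hj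
      have hj2 := hprev (j + 1) (by omega)
      rw [hgs (j + 1) (by omega) (by omega)] at hj2
      simpa using hj2
    · intro k hk hnext
      have hkn : k < n := by by_contra h; exact hk (hgout k (by omega))
      have hk0 : 0 < k := by
        rcases Nat.eq_zero_or_pos k with h | h
        · exfalso; apply hk; subst h; rw [hg0', hL]; ring
        · exact h
      rw [hgs k hk0 hkn] at hk ⊢
      apply h4 (k - 1) hk
      intro j hj
      by_cases hjn : j < n - 1
      · have hj2 := hnext (j + 1) (by omega)
        rw [hgs (j + 1) (by omega) (by omega)] at hj2
        simpa using hj2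
      · by_cases hjn2 : j = n - 1
        · rw [hjn2]; exact hL
        · exact hf0 j (by omega)
    · intro k j hkj hk hj hbet
      have hjn : j < n := by by_contra h; exact hj (hgout j (by omega))
      have hk0 : 0 < k := by
        rcases Nat.eq_zero_or_pos k with h | h
        · exfalso; apply hk; subst h; rw [hg0', hL]; ring
        · exact h
      rw [hgs k hk0 (by omega)] at hk
      rw [hgs j (by omega) hjn] at hj
      rw [hgs j (by omega) hjn, hgs k hk0 (by omega)]
      apply h5 (k - 1) (j - 1) (by omega) hk hj
      intro m hm1 hm2
      have hm3 := hbet (m + 1) (by omega) (by omega)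
      rw [hgs (m + 1) (by omega) (by omega)] at hm3
      simpa using hm3
  · right
    have hL1 : f (n - 1) = 1 := h4 (n - 1) hL (fun j hj => hf0 j (by omega))
    have hδ0 : -(g 0) = 1 := by rw [hg0', hL1]; ring
    refine ⟨?_, ⟨0, ?_⟩, ?_, ?_, ?_⟩
    · intro k
      show -(g k) = -1 ∨ -(g k) = 0 ∨ -(g k) = 1
      rcases Nat.eq_zero_or_pos k with h | h
      · subst h; omega
      · by_cases hk : k < n
        · have e := hgs k h hk
          have := h1 (k - 1)
          omega
        · have := hgout k (by omega)
          omega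
    · show -(g 0) ≠ 0
      omega
    · intro k hk hprev
      have hk' : -(g k) ≠ 0 := hk
      show -(g k) = 1
      rcases Nat.eq_zero_or_pos k with h | h
      · subst h; exact hδ0
      · have h0 : -(g 0) = 0 := hprev 0 h
        omega
    · intro k hk hnext
      have hk' : -(g k) ≠ 0 := hk
      show -(g k) = 1
      have hkn : k < n := by
        by_contra h; exact hk' (by rw [hgout k (by omega)]; ring)
      rcases Nat.eq_zero_or_pos k with h | h
      · subst h; exact hδ0
      · have ek : g k = f (k - 1) := hgs k h hkn
        have hz : ∀ m, k - 1 < m → m < n - 1 → f m = 0 := by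
          intro m hm1 hm2
          have hm3 : -(g (m + 1)) = 0 := hnext (m + 1) (by omega)
          have : g (m + 1) = f m := by
            have := hgs (m + 1) (by omega) (by omega)
            simpa using this
          omega
        have := h5 (k - 1) (n - 1) (by omega) (by omega) hL hz
        omega
    · intro k j hkj hk hj hbet
      have hk' : -(g k) ≠ 0 := hk
      have hj' : -(g j) ≠ 0 := hj
      show -(g j) = -(-(g k))
      have hjn : j < n := by
        by_contra h; exact hj' (by rw [hgout j (by omega)]; ring)
      have ej : g j = f (j - 1) := hgs j (by omega) hjn
      rcases Nat.eq_zero_or_pos k with h | h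
      · subst h
        have hfj : f (j - 1) = 1 := by
          apply h3 (j - 1) (by omega)
          intro m hm
          have hm3 : -(g (m + 1)) = 0 := hbet (m + 1) (by omega) (by omega)
          have : g (m + 1) = f m := by
            have := hgs (m + 1) (by omega) (by omega)
            simpa using this
          omega
        omega
      · have ek : g k = f (k - 1) := hgs k h (by omega)
        have := h5 (k - 1) (j - 1) (by omega) (by omega) (by omega) ?_
        · omega
        · intro m hm1 hm2
          have hm3 : -(g (m + 1)) = 0 := hbet (m + 1) (by omega) (by omega)
          have : g (m + 1) = f m := by
            have := hgs (m + 1) (by omega) (by omega)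
            simpa using this
          omega

/-- Rotation backward: `g = (f 1, …, f(n−1), −f 0)`. -/
lemma rotB' (n : ℕ) (f g : ℕ → ℤ)
    (hf0 : ∀ k, n ≤ k → f k = 0)
    (hgl : ∀ _ : 0 < n, g (n - 1) = -f 0)
    (hgs : ∀ k, k < n - 1 → g k = f (k + 1))
    (hgout : ∀ k, n ≤ k → g k = 0)
    (hf : AltN f) : AltN g ∨ AltN (fun k => -(g k)) := by
  obtain ⟨h1, ⟨w, hw⟩, h3, h4, h5⟩ := hf
  have hwn : w < n := by by_contra h; exact hw (hf0 w (by omega))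
  have hn : 0 < n := by omega
  have hgl' : g (n - 1) = -f 0 := hgl hn
  by_cases h0 : f 0 = 0
  · left
    have hw1 : 0 < w := by
      rcases Nat.eq_zero_or_pos w with h | h
      · exfalso; apply hw; rw [h]; exact h0
      · exact h
    refine ⟨?_, ⟨w - 1, ?_⟩, ?_, ?_, ?_⟩
    · intro k
      by_cases hk : k < n - 1
      · rw [hgs k hk]; exact h1 _
      · by_cases hk2 : k < n
        · have : k = n - 1 := by omega
          rw [this, hgl', h0]; omega
        · rw [hgout k (by omega)]; omega
    · rw [hgs (w - 1) (by omega)]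
      have : w - 1 + 1 = w := by omega
      rw [this]; exact hw
    · intro k hk hprev
      have hkn : k < n - 1 := by
        by_contra h
        by_cases hk2 : k < n
        · apply hk; have : k = n - 1 := by omega
          rw [this, hgl', h0]; ring
        · exact hk (hgout k (by omega))
      rw [hgs k hkn] at hk ⊢
      apply h3 (k + 1) hk
      intro m hm
      rcases Nat.eq_zero_or_pos m with h | h
      · rw [h]; exact h0
      · have := hprev (m - 1) (by omega)
        rw [hgs (m - 1) (by omega)] at this
        have e : m - 1 + 1 = m := by omega
        rwa [e] at this
    · intro k hk hnext
      have hkn : k < n - 1 := by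
        by_contra h
        by_cases hk2 : k < n
        · apply hk; have : k = n - 1 := by omega
          rw [this, hgl', h0]; ring
        · exact hk (hgout k (by omega))
      rw [hgs k hkn] at hk ⊢
      apply h4 (k + 1) hk
      intro m hm
      by_cases hmn : m < n
      · have := hnext (m - 1) (by omega)
        rw [hgs (m - 1) (by omega)] at this
        have e : m - 1 + 1 = m := by omega
        rwa [e] at this
      · exact hf0 m (by omega)
    · intro k j hkj hk hj hbet
      have hjn : j < n - 1 := by
        by_contra h
        by_cases hj2 : j < n
        · apply hj; have : j = n - 1 := by omega
          rw [this, hgl', h0]; ring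
        · exact hj (hgout j (by omega))
      rw [hgs k (by omega)] at hk
      rw [hgs j hjn] at hj
      rw [hgs j hjn, hgs k (by omega)]
      apply h5 (k + 1) (j + 1) (by omega) hk hj
      intro m hm1 hm2
      have := hbet (m - 1) (by omega) (by omega)
      rw [hgs (m - 1) (by omega)] at this
      have e : m - 1 + 1 = m := by omega
      rwa [e] at this
  · right
    have h01 : f 0 = 1 := h3 0 h0 (fun j hj => absurd hj (Nat.not_lt_zero j))
    have hδl : -(g (n - 1)) = 1 := by rw [hgl', h01]; ring
    refine ⟨?_, ⟨n - 1, ?_⟩, ?_, ?_, ?_⟩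
    · intro k
      show -(g k) = -1 ∨ -(g k) = 0 ∨ -(g k) = 1
      by_cases hk : k < n - 1
      · have := hgs k hk
        have := h1 (k + 1)
        omega
      · by_cases hk2 : k < n
        · have hke : k = n - 1 := by omega
          subst hke
          omega
        · have := hgout k (by omega)
          omega
    · show -(g (n - 1)) ≠ 0
      omega
    · intro k hk hprev
      have hk' : -(g k) ≠ 0 := hk
      show -(g k) = 1
      have hkn : k < n := by
        by_contra h; exact hk' (by rw [hgout k (by omega)]; ring)
      by_cases hke : k = n - 1
      · rw [hke]; exact hδl
      · have hklt : k < n - 1 := by omega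
        have ek : g k = f (k + 1) := hgs k hklt
        have := h5 0 (k + 1) (by omega) h0 (by omega) ?_
        · omega
        · intro m hm1 hm2
          have hm3 : -(g (m - 1)) = 0 := hprev (m - 1) (by omega)
          have : g (m - 1) = f m := by
            have := hgs (m - 1) (by omega)
            have e : m - 1 + 1 = m := by omega
            rwa [e] at this
          omega
    · intro k hk hnext
      have hk' : -(g k) ≠ 0 := hk
      show -(g k) = 1
      have hkn : k < n := by
        by_contra h; exact hk' (by rw [hgout k (by omega)]; ring)
      by_cases hke : k = n - 1
      · rw [hke]; exact hδl
      · exfalso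
        have : -(g (n - 1)) = 0 := hnext (n - 1) (by omega)
        omega
    · intro k j hkj hk hj hbet
      have hk' : -(g k) ≠ 0 := hk
      have hj' : -(g j) ≠ 0 := hj
      show -(g j) = -(-(g k))
      have hjn : j < n := by
        by_contra h; exact hj' (by rw [hgout j (by omega)]; ring)
      have ek : g k = f (k + 1) := hgs k (by omega)
      by_cases hje : j = n - 1
      · have hfk : f (k + 1) = 1 := by
          apply h4 (k + 1) (by omega)
          intro m hm
          by_cases hmn : m < n
          · have hm3 : -(g (m - 1)) = 0 := hbet (m - 1) (by omega) (by omega)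
            have : g (m - 1) = f m := by
              have := hgs (m - 1) (by omega)
              have e : m - 1 + 1 = m := by omega
              rwa [e] at this
            omega
          · exact hf0 m (by omega)
        have : g j = -f 0 := by rw [hje]; exact hgl'
        omega
      · have ej : g j = f (j + 1) := hgs j (by omega)
        have := h5 (k + 1) (j + 1) (by omega) (by omega) (by omega) ?_
        · omega
        · intro m hm1 hm2
          have hm3 : -(g (m - 1)) = 0 := hbet (m - 1) (by omega) (by omega)
          have : g (m - 1) = f m := by
            have := hgs (m - 1) (by omega)
            have e : m - 1 + 1 = m := by omega
            rwa [e] at this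
          omega

lemma coe_one_sub (a : Fin 2) : (((1 - a : Fin 2) : ℕ) : ℤ) = 1 - ((a : ℕ) : ℤ) := by
  fin_cases a <;> rfl

lemma theta_zero {n : ℕ} (a : Fin n → Fin 2) (hn : 0 < n) :
    theta n a ⟨0, hn⟩ = 1 - a ⟨n - 1, Nat.sub_lt hn Nat.one_pos⟩ := by
  simp [theta]

lemma theta_succ {n : ℕ} (a : Fin n → Fin 2) (k : ℕ) (h1 : k + 1 < n) :
    theta n a ⟨k + 1, h1⟩ = a ⟨k, by omega⟩ := by
  simp [theta]

lemma thetaInv_last {n : ℕ} (a : Fin n → Fin 2) (hn : 0 < n) :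
    thetaInv n a ⟨n - 1, Nat.sub_lt hn Nat.one_pos⟩ = 1 - a ⟨0, hn⟩ := by
  simp [thetaInv]

lemma thetaInv_lt {n : ℕ} (a : Fin n → Fin 2) (k : ℕ) (h1 : k < n - 1) :
    thetaInv n a ⟨k, by omega⟩ = a ⟨k + 1, by omega⟩ := by
  have : ¬ (k = n - 1) := by omega
  simp [thetaInv, this]

lemma theta_covers (n : ℕ) (x y : Fin n → Fin 2) (h : Covers n x y) :
    Covers n (theta n x) (theta n y) ∨ Covers n (theta n y) (theta n x) := by
  unfold Covers at h ⊢
  rw [isAlt_iff] at h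
  have key := rotA' n (Aext n (fun i => ((y i : ℕ) : ℤ) - ((x i : ℕ) : ℤ)))
      (Aext n (fun i => ((theta n y i : ℕ) : ℤ) - ((theta n x i : ℕ) : ℤ)))
      (fun k hk => Aext_ge (by omega))
      ?hg0 ?hgs (fun k hk => Aext_ge (by omega)) h
  case hg0 =>
    intro hn
    rw [Aext_lt hn, Aext_lt (show n - 1 < n by omega)]
    show ((theta n y ⟨0, hn⟩ : ℕ) : ℤ) - ((theta n x ⟨0, hn⟩ : ℕ) : ℤ)
        = -(((y ⟨n - 1, _⟩ : ℕ) : ℤ) - ((x ⟨n - 1, _⟩ : ℕ) : ℤ))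
    rw [theta_zero y hn, theta_zero x hn, coe_one_sub, coe_one_sub]
    ring_nf
  case hgs =>
    intro k hk0 hkn
    rw [Aext_lt hkn, Aext_lt (show k - 1 < n by omega)]
    obtain ⟨k', rfl⟩ : ∃ k', k = k' + 1 := ⟨k - 1, by omega⟩
    show ((theta n y ⟨k' + 1, hkn⟩ : ℕ) : ℤ) - ((theta n x ⟨k' + 1, hkn⟩ : ℕ) : ℤ)
        = ((y ⟨k', by omega⟩ : ℕ) : ℤ) - ((x ⟨k', by omega⟩ : ℕ) : ℤ)
    rw [theta_succ y k' hkn, theta_succ x k' hkn]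
  rcases key with hg | hg
  · left; rw [isAlt_iff]; exact hg
  · right; rw [isAlt_iff]
    have e : (fun k => -(Aext n (fun i => ((theta n y i : ℕ) : ℤ) - ((theta n x i : ℕ) : ℤ)) k))
        = Aext n (fun i => ((theta n x i : ℕ) : ℤ) - ((theta n y i : ℕ) : ℤ)) := by
      funext k
      by_cases hk : k < n
      · rw [Aext_lt hk, Aext_lt hk]; ring
      · rw [Aext_ge hk, Aext_ge hk]; ring
    rwa [e] at hg

lemma thetaInv_covers (n : ℕ) (x y : Fin n → Fin 2) (h : Covers n x y) :
    Covers n (thetaInv n x) (thetaInv n y) ∨ Covers n (thetaInv n y) (thetaInv n x) := by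
  unfold Covers at h ⊢
  rw [isAlt_iff] at h
  have key := rotB' n (Aext n (fun i => ((y i : ℕ) : ℤ) - ((x i : ℕ) : ℤ)))
      (Aext n (fun i => ((thetaInv n y i : ℕ) : ℤ) - ((thetaInv n x i : ℕ) : ℤ)))
      (fun k hk => Aext_ge (by omega))
      ?hgl ?hgs (fun k hk => Aext_ge (by omega)) h
  case hgl =>
    intro hn
    rw [Aext_lt (show n - 1 < n from Nat.sub_lt hn Nat.one_pos), Aext_lt hn]
    show ((thetaInv n y ⟨n - 1, _⟩ : ℕ) : ℤ) - ((thetaInv n x ⟨n - 1, _⟩ : ℕ) : ℤ)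
        = -(((y ⟨0, hn⟩ : ℕ) : ℤ) - ((x ⟨0, hn⟩ : ℕ) : ℤ))
    rw [thetaInv_last y hn, thetaInv_last x hn, coe_one_sub, coe_one_sub]
    ring
  case hgs =>
    intro k hk
    rw [Aext_lt (show k < n by omega), Aext_lt (show k + 1 < n by omega)]
    show ((thetaInv n y ⟨k, _⟩ : ℕ) : ℤ) - ((thetaInv n x ⟨k, _⟩ : ℕ) : ℤ)
        = ((y ⟨k + 1, _⟩ : ℕ) : ℤ) - ((x ⟨k + 1, _⟩ : ℕ) : ℤ)
    rw [thetaInv_lt y k hk, thetaInv_lt x k hk]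
  rcases key with hg | hg
  · left; rw [isAlt_iff]; exact hg
  · right; rw [isAlt_iff]
    have e : (fun k => -(Aext n (fun i => ((thetaInv n y i : ℕ) : ℤ) - ((thetaInv n x i : ℕ) : ℤ)) k))
        = Aext n (fun i => ((thetaInv n x i : ℕ) : ℤ) - ((thetaInv n y i : ℕ) : ℤ)) := by
      funext k
      by_cases hk : k < n
      · rw [Aext_lt hk, Aext_lt hk]; ring
      · rw [Aext_ge hk, Aext_ge hk]; ring
    rwa [e] at hg

lemma one_sub_one_sub (a : Fin 2) : 1 - (1 - a) = a := by fin_cases a <;> rfl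

lemma thetaInv_theta (n : ℕ) (a : Fin n → Fin 2) : thetaInv n (theta n a) = a := by
  funext i
  by_cases h : (i : ℕ) = n - 1
  · have h1 : thetaInv n (theta n a) i = 1 - theta n a ⟨0, i.pos⟩ := dif_pos h
    have h2 : theta n a ⟨0, i.pos⟩
        = 1 - a ⟨n - 1, Nat.sub_lt i.pos Nat.one_pos⟩ := dif_pos rfl
    rw [h1, h2, one_sub_one_sub]
    exact congrArg a (Fin.ext h.symm)
  · have h1 : thetaInv n (theta n a) i
      = theta n a ⟨(i : ℕ) + 1, by have := i.isLt; omega⟩ := dif_neg h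
    have h2 : theta n a ⟨(i : ℕ) + 1, by have := i.isLt; omega⟩
        = a ⟨(i : ℕ) + 1 - 1, by have := i.isLt; omega⟩ := dif_neg (Nat.succ_ne_zero _)
    rw [h1, h2]
    exact congrArg a (Fin.ext (show (i : ℕ) + 1 - 1 = (i : ℕ) by omega))

/-- θ is an automorphism of the Hasse diagram of Φₙ: x and y are adjacent (one
covers the other) iff θ(x) and θ(y) are adjacent. -/
theorem theta_automorphism (n : ℕ) (x y : Fin n → Fin 2) :
    (Covers n x y ∨ Covers n y x) ↔
      (Covers n (theta n x) (theta n y) ∨ Covers n (theta n y) (theta n x)) := by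
  constructor
  · rintro (h | h)
    · exact theta_covers n x y h
    · exact (theta_covers n y x h).symm
  · rintro (h | h)
    · have := thetaInv_covers n (theta n x) (theta n y) h
      rwa [thetaInv_theta, thetaInv_theta] at this
    · have := thetaInv_covers n (theta n y) (theta n x) h
      rw [thetaInv_theta, thetaInv_theta] at this
      exact this.symm
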